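/- arXiv:1301.3078 — 2 statements merged into one kernel-verified Lean document; each statement's English description precedes it below -/
import Mathlib

section
/- Let s ≥ 1 and let d = (d_1,…,d_s) be a multidegree with every d_i ≥ 2 and not (s = 1 and d_1 = 2). Then for every integer k' ≥ −1, Σ_{i=1}^s C(d_i+k', k'+2) ≥ 2; consequently the second forward difference δ(n,d,k,k'+2) − 2·δ(n,d,k,k'+1) + δ(n,d,k,k') is nonnegative for all k' ≥ −1, i.e. the function k' ↦ δ(n,d,k,k') is convex on {−1, 0, …, k}. -/
/-!
The quadratic part `(k - k') (n - k + k' + 1)` of `δ(n, d, k, k')` has constant second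
difference `-2`, while by Pascal's rule applied twice the second difference of
`k' ↦ C(d + k', k')` is `C(d + k', k' + 2)`. Each of these is at least `1`; it is at least `2`
as soon as `d ≥ 3`, so the sum over `i` is at least `2` unless `s = 1` and `d_1 = 2`.
-/

/-- Binomial coefficient on integers, with the convention `C(a, b) = 0`
whenever `a < 0` or `b < 0` (in particular `C(m, -1) = 0`). -/
def chooseZ (a b : ℤ) : ℤ :=
  if 0 ≤ a ∧ 0 ≤ b then (a.toNat.choose b.toNat : ℤ) else 0

/-- The expected dimension `δ(n, d, k, k')` of the locus of `k`-planes `Λ` in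
`V(f)` with `dim (Λ ∩ Λ') = k'`. -/
def deltaKL (n k : ℕ) {s : ℕ} (d : Fin s → ℕ) (k' : ℤ) : ℤ :=
  ((k : ℤ) - k') * ((n : ℤ) - (k : ℤ) + k' + 1)
    + ∑ i, chooseZ ((d i : ℤ) + k') k'
    - ∑ i, chooseZ ((d i : ℤ) + (k : ℤ)) (k : ℤ)

lemma chooseZ_natCast (a b : ℕ) : chooseZ a b = a.choose b := by
  simp [chooseZ]

lemma chooseZ_of_neg_right (a : ℤ) {b : ℤ} (hb : b < 0) : chooseZ a b = 0 :=
  if_neg fun h => hb.not_ge h.2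

lemma chooseZ_zero_right {a : ℤ} (ha : 0 ≤ a) : chooseZ a 0 = 1 := by
  simp [chooseZ, ha]

-- Pascal's rule holds for every `b` thanks to the convention `C(a, -1) = 0`.
lemma chooseZ_add_one_add_one {a : ℤ} (ha : 0 ≤ a) (b : ℤ) :
    chooseZ (a + 1) (b + 1) = chooseZ a b + chooseZ a (b + 1) := by
  lift a to ℕ using ha
  rcases lt_trichotomy b (-1) with hb | rfl | hb
  · rw [chooseZ_of_neg_right _ (by omega), chooseZ_of_neg_right _ (by omega),
      chooseZ_of_neg_right _ (by omega), add_zero]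
  · rw [neg_add_cancel, chooseZ_zero_right (by positivity), chooseZ_zero_right (by positivity),
      chooseZ_of_neg_right _ (by norm_num), zero_add]
  · lift b to ℕ using by omega
    simp only [← Nat.cast_add_one, chooseZ_natCast]
    exact_mod_cast Nat.choose_succ_succ' a b

lemma chooseZ_second_difference {a : ℤ} (ha : 0 ≤ a) (b : ℤ) :
    chooseZ (a + 2) (b + 2) - 2 * chooseZ (a + 1) (b + 1) + chooseZ a b = chooseZ a (b + 2) := by
  have h₂ := chooseZ_add_one_add_one (a := a + 1) (by omega) (b + 1)
  have h₁ := chooseZ_add_one_add_one ha b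
  have h₁' := chooseZ_add_one_add_one ha (b + 1)
  rw [add_assoc, add_assoc, one_add_one_eq_two] at h₂
  rw [add_assoc, one_add_one_eq_two] at h₁'
  linarith

lemma one_le_chooseZ {a b : ℤ} (hb : 0 ≤ b) (hba : b ≤ a) : 1 ≤ chooseZ a b := by
  lift b to ℕ using hb
  lift a to ℕ using by omega
  rw [chooseZ_natCast]
  exact_mod_cast Nat.choose_pos (by omega)

lemma two_le_chooseZ {a b : ℤ} (hb : 0 < b) (hba : b < a) : 2 ≤ chooseZ a b := by
  have h := chooseZ_add_one_add_one (a := a - 1) (by omega) (b - 1)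
  simp only [sub_add_cancel] at h
  have := one_le_chooseZ (a := a - 1) (b := b - 1) (by omega) (by omega)
  have := one_le_chooseZ (a := a - 1) (b := b) (by omega) (by omega)
  omega

lemma two_le_sum_of_one_le {ι : Type*} [Fintype ι] {f : ι → ℤ} (hf : ∀ i, 1 ≤ f i)
    (h : 2 ≤ Fintype.card ι ∨ ∃ i, 2 ≤ f i) : 2 ≤ ∑ i, f i := by
  rcases h with hcard | ⟨i, hi⟩
  · calc (2 : ℤ) ≤ Fintype.card ι := by exact_mod_cast hcard
      _ = ∑ _i : ι, (1 : ℤ) := by simp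
      _ ≤ ∑ i, f i := Finset.sum_le_sum fun i _ => hf i
  · exact hi.trans (Finset.single_le_sum (fun j _ => zero_le_one.trans (hf j)) (Finset.mem_univ i))

lemma deltaKL_second_difference (n k : ℕ) {s : ℕ} (d : Fin s → ℕ) (hd : ∀ i, 1 ≤ d i) {k' : ℤ}
    (hk' : -1 ≤ k') :
    deltaKL n k d (k' + 2) - 2 * deltaKL n k d (k' + 1) + deltaKL n k d k'
      = ∑ i, chooseZ ((d i : ℤ) + k') (k' + 2) - 2 := by
  have hterm (i : Fin s) : chooseZ ((d i : ℤ) + (k' + 2)) (k' + 2)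
      - 2 * chooseZ ((d i : ℤ) + (k' + 1)) (k' + 1) + chooseZ ((d i : ℤ) + k') k'
      = chooseZ ((d i : ℤ) + k') (k' + 2) := by
    convert chooseZ_second_difference (a := d i + k') (by have := hd i; omega) k' using 3 <;> ring_nf
  simp only [deltaKL, ← Finset.sum_congr rfl fun i _ => hterm i, Finset.sum_add_distrib,
    Finset.sum_sub_distrib, ← Finset.mul_sum]
  ring

theorem delta_convex
    (n k s : ℕ) (hs : 1 ≤ s) (d : Fin s → ℕ) (hd : ∀ i, 2 ≤ d i)
    (hd2 : ¬(s = 1 ∧ ∀ i, d i = 2)) :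
    (∀ k' : ℤ, -1 ≤ k' → 2 ≤ ∑ i, chooseZ ((d i : ℤ) + k') (k' + 2)) ∧
    (∀ k' : ℤ, -1 ≤ k' →
      0 ≤ deltaKL n k d (k' + 2) - 2 * deltaKL n k d (k' + 1) + deltaKL n k d k') := by
  have hsum (k' : ℤ) (hk' : -1 ≤ k') : 2 ≤ ∑ i, chooseZ ((d i : ℤ) + k') (k' + 2) := by
    refine two_le_sum_of_one_le (fun i => one_le_chooseZ (by omega) (by have := hd i; omega)) ?_
    by_contra! h
    refine hd2 ⟨by have := h.1; rw [Fintype.card_fin] at this; omega, fun i => ?_⟩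
    by_contra hi
    have := two_le_chooseZ (a := d i + k') (b := k' + 2) (by omega) (by have := hd i; omega)
    exact (h.2 i).not_ge this
  refine ⟨hsum, fun k' hk' => ?_⟩
  rw [deltaKL_second_difference n k d (fun i => (hd i).trans' one_le_two) hk']
  linarith [hsum k' hk']
end

section
/- Let n, k, r be natural numbers with 2k+2 ≤ r ≤ n+1. Then there exists a symmetric (n+1)×(n+1) complex matrix Q such that: Q has rank exactly r; Q_{uv} = 0 for all 0 ≤ u, v ≤ k (equivalently, the quadratic form x ↦ xᵀQx vanishes identically on the span of the standard basis vectors e_0,…,e_k); and the leading principal r×r submatrix of Q is invertible. -/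
/-!
Take for `Q` the `r × r` exchange matrix (ones on the anti-diagonal `u + v = r - 1`) placed in
the top-left corner and padded by zeros. It is symmetric, its corner is a permutation matrix, and
since `u, v ≤ k` gives `u + v ≤ 2k < r - 1`, it vanishes on the `k`-plane. Its rank is `r`: the
invertible corner bounds it from below, its `r` nonzero rows from above.
-/

open Matrix

namespace Matrix

theorem isUnit_det_permMatrix {n R : Type*} [Fintype n] [DecidableEq n] [CommRing R]
    (σ : Equiv.Perm n) : IsUnit (σ.permMatrix R).det := by
  rw [det_permutation]
  exact (Equiv.Perm.sign σ).isUnit.map (Int.castRingHom R)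

theorem rank_eq_card_of_isUnit_det_submatrix {m n R : Type*} [Fintype m] [Fintype n]
    [DecidableEq m] [CommRing R] [StrongRankCondition R] (A : Matrix n n R) (f : m ↪ n)
    (hdet : IsUnit (A.submatrix f f).det) (hrow : ∀ i, i ∉ Set.range f → A i = 0) :
    A.rank = Fintype.card m := by
  classical
  refine le_antisymm ?_ ?_
  · calc A.rank ≤ (Finset.univ.map f).card := by
          refine A.rank_le_card_of_support_subset _ fun i hi => ?_
          by_contra hf
          exact hi (hrow i (by simpa using hf))
      _ = Fintype.card m := by simp
  · calc Fintype.card m = (A.submatrix f f).rank :=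
          ((A.submatrix f f).rank_of_isUnit ((isUnit_iff_isUnit_det _).mpr hdet)).symm
      _ ≤ A.rank := A.rank_submatrix_le f f

end Matrix

def cornerExchange (R : Type*) [Zero R] [One R] (N r : ℕ) : Matrix (Fin N) (Fin N) R :=
  of fun u v => if u.val + v.val + 1 = r then 1 else 0

section cornerExchange

variable (R : Type*) {N r : ℕ}

theorem cornerExchange_apply_eq_zero [Zero R] [One R] {u v : Fin N}
    (h : u.val + v.val + 1 ≠ r) : cornerExchange R N r u v = 0 :=
  if_neg h

theorem cornerExchange_transpose [Zero R] [One R] :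
    (cornerExchange R N r)ᵀ = cornerExchange R N r := by
  ext u v
  simp only [cornerExchange, transpose_apply, of_apply, add_comm (u : ℕ)]

theorem cornerExchange_row_eq_zero [Zero R] [One R] {u : Fin N} (h : r ≤ u.val) :
    cornerExchange R N r u = 0 := by
  ext v
  exact cornerExchange_apply_eq_zero R (by omega)

theorem cornerExchange_submatrix_castLE [Semiring R] (h : r ≤ N) :
    (cornerExchange R N r).submatrix (Fin.castLE h) (Fin.castLE h) =
      (Fin.revPerm : Equiv.Perm (Fin r)).permMatrix R := by
  ext i j
  simp only [cornerExchange, submatrix_apply, of_apply, Fin.val_castLE, Equiv.Perm.permMatrix,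
    PEquiv.toMatrix_apply, Equiv.toPEquiv_apply, Option.mem_def, Option.some_inj, Fin.ext_iff,
    Fin.revPerm_apply, Fin.val_rev]
  exact if_congr (by omega) rfl rfl

end cornerExchange

theorem exists_rank_r_quadric_vanishing_on_kplane_with_invertible_corner
    (n k r : ℕ) (hr1 : 2 * k + 2 ≤ r) (hr2 : r ≤ n + 1) :
    ∃ Q : Matrix (Fin (n + 1)) (Fin (n + 1)) ℂ,
      Qᵀ = Q ∧
      Q.rank = r ∧
      (∀ u v : Fin (n + 1), u.val ≤ k → v.val ≤ k → Q u v = 0) ∧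
      IsUnit (Q.submatrix (Fin.castLE hr2) (Fin.castLE hr2)).det := by
  have hcorner : IsUnit ((cornerExchange ℂ (n + 1) r).submatrix
      (Fin.castLE hr2) (Fin.castLE hr2)).det := by
    rw [cornerExchange_submatrix_castLE]
    exact isUnit_det_permMatrix _
  refine ⟨cornerExchange ℂ (n + 1) r, cornerExchange_transpose ℂ, ?_,
    fun u v hu hv => cornerExchange_apply_eq_zero ℂ (by omega), hcorner⟩
  rw [rank_eq_card_of_isUnit_det_submatrix _ (Fin.castLEEmb hr2) hcorner, Fintype.card_fin]
  intro u hu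
  exact cornerExchange_row_eq_zero ℂ (not_lt.mp fun hlt => hu ⟨⟨u, hlt⟩, rfl⟩)
end
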